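/- arXiv:2410.16328 — 2 statements merged into one kernel-verified Lean document; each statement's English description precedes it below -/
import Mathlib

section
/- (Doctrinal Herbrand theorem.) Let P : Cᵒᵖ → BoolAlg be a Boolean doctrine over a small category C with finite products, and let (id_C, 𝔦) : P → P^∀∃ be a quantifier completion of P. For all S, Y₁, …, Y_ī, W₁, …, W_h̄, Z₁, …, Z_j̄, V₁, …, V_k̄ ∈ C, αᵢ ∈ P(S×Yᵢ), γ_h ∈ P(S×W_h), βⱼ ∈ P(S×Zⱼ), δ_k ∈ P(S×V_k), the following are equivalent: (1) in P^∀∃(S), (⋀_{i=1}^{ī} ∀_S^{Yᵢ}(𝔦_{S×Yᵢ}(αᵢ))) ∧ (⋀_{h=1}^{h̄} ∃_S^{W_h}(𝔦_{S×W_h}(γ_h))) ≤ (⋁_{j=1}^{j̄} ∀_S^{Zⱼ}(𝔦_{S×Zⱼ}(βⱼ))) ∨ (⋁_{k=1}^{k̄} ∃_S^{V_k}(𝔦_{S×V_k}(δ_k))); (2) there are n, n' ∈ ℕ, indices l₁, …, l_n ∈ {1, …, ī} and l'₁, …, l'_{n'} ∈ {1, …, k̄}, morphisms gᵢ : S ×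 ∏_{j=1}^{j̄} Zⱼ × ∏_{h=1}^{h̄} W_h → Y_{lᵢ} and g'_k : S × ∏_{j=1}^{j̄} Zⱼ × ∏_{h=1}^{h̄} W_h → V_{l'_k} such that, in P(S × ∏_{j=1}^{j̄} Zⱼ × ∏_{h=1}^{h̄} W_h), ⋀_{i=1}^{n} P(⟨pr₁, gᵢ⟩)(α_{lᵢ}) ∧ ⋀_{h=1}^{h̄} P(⟨pr₁, pr_{h+j̄+1}⟩)(γ_h) ≤ ⋁_{j=1}^{j̄} P(⟨pr₁, pr_{j+1}⟩)(βⱼ) ∨ ⋁_{k=1}^{n'} P(⟨pr₁, g'_k⟩)(δ_{l'_k}). -/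
open CategoryTheory CategoryTheory.Limits Opposite

universe w v u v₁ u₁ v₂ u₂ v₃ u₃

namespace BooleanDoctrine

/-- Elements of a Boolean algebra in the category `BoolAlg` can be acted on by morphisms. -/
instance (X Y : BoolAlg) : FunLike (X ⟶ Y) X Y :=
  ConcreteCategory.instFunLike

/-- A filter of a Boolean algebra: contains `⊤`, closed under binary meets, upward closed. -/
def IsBAFilter {A : Type*} [BooleanAlgebra A] (F : Set A) : Prop :=
  (⊤ : A) ∈ F ∧ (∀ a b : A, a ∈ F → b ∈ F → a ⊓ b ∈ F) ∧ ∀ a b : A, a ∈ F → a ≤ b → b ∈ F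

/-- The fiber of a Boolean doctrine at an object of the base category. -/
abbrev fiber {C : Type u₁} [Category.{v₁} C] (P : Cᵒᵖ ⥤ BoolAlg.{w}) (X : C) : Type w :=
  P.obj (op X)

/-- A universal filter for a Boolean doctrine `P : Cᵒᵖ ⥤ BoolAlg`. -/
def IsUniversalFilter {C : Type u₁} [Category.{v₁} C] [HasFiniteProducts C]
    (P : Cᵒᵖ ⥤ BoolAlg.{w}) (F : ∀ X : C, Set (P.obj (op X))) : Prop :=
  (∀ (X Y : C) (f : X ⟶ Y) (α : P.obj (op Y)), α ∈ F Y → P.map f.op α ∈ F X) ∧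
    ∀ X : C, IsBAFilter (F X)

/-- A universal ideal for a Boolean doctrine `P : Cᵒᵖ ⥤ BoolAlg`. -/
def IsUniversalIdeal {C : Type u₁} [Category.{v₁} C] [HasFiniteProducts C]
    (P : Cᵒᵖ ⥤ BoolAlg.{w}) (I : ∀ X : C, Set (P.obj (op X))) : Prop :=
  (∀ (X Y : C) (m : ℕ) (f : Fin m → (X ⟶ Y)) (α : P.obj (op Y)),
      (Finset.univ.inf fun j => P.map (f j).op α) ∈ I X → α ∈ I Y) ∧
    (∀ (X : C) (a b : P.obj (op X)), a ≤ b → b ∈ I X → a ∈ I X) ∧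
    (∀ (X₁ X₂ : C) (α₁ : P.obj (op X₁)) (α₂ : P.obj (op X₂)), α₁ ∈ I X₁ → α₂ ∈ I X₂ →
      P.map (prod.fst : X₁ ⨯ X₂ ⟶ X₁).op α₁ ⊔ P.map (prod.snd : X₁ ⨯ X₂ ⟶ X₂).op α₂ ∈
        I (X₁ ⨯ X₂)) ∧
    (⊥ : P.obj (op (⊤_ C))) ∈ I (⊤_ C)

/-- A universal ultrafilter for a Boolean doctrine `P : Cᵒᵖ ⥤ BoolAlg`. -/
def IsUniversalUltrafilter {C : Type u₁} [Category.{v₁} C] [HasFiniteProducts C]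
    (P : Cᵒᵖ ⥤ BoolAlg.{w}) (F : ∀ X : C, Set (P.obj (op X))) : Prop :=
  (∀ (X Y : C) (f : X ⟶ Y) (α : P.obj (op Y)), α ∈ F Y → P.map f.op α ∈ F X) ∧
    (∀ X : C, IsBAFilter (F X)) ∧
    (∀ (X₁ X₂ : C) (α₁ : P.obj (op X₁)) (α₂ : P.obj (op X₂)),
      P.map (prod.fst : X₁ ⨯ X₂ ⟶ X₁).op α₁ ⊔ P.map (prod.snd : X₁ ⨯ X₂ ⟶ X₂).op α₂ ∈
          F (X₁ ⨯ X₂) →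
        α₁ ∈ F X₁ ∨ α₂ ∈ F X₂) ∧
    (⊥ : P.obj (op (⊤_ C))) ∉ F (⊤_ C)

/-- Richness of a Boolean doctrine with respect to a family of subsets of the fibers. -/
def IsRich {C : Type u₁} [Category.{v₁} C] [HasFiniteProducts C]
    (P : Cᵒᵖ ⥤ BoolAlg.{w}) (F : ∀ X : C, Set (P.obj (op X))) : Prop :=
  ∀ (X : C) (α : P.obj (op X)), α ∉ F X → ∃ c : (⊤_ C) ⟶ X, P.map c.op α ∉ F (⊤_ C)

/-- The failure of the "universal closure" of `a` witnessed by a constant `c : ⊤ ⟶ X`. -/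
def IsRichAt {C : Type u₁} [Category.{v₁} C] [HasFiniteProducts C]
    (P : Cᵒᵖ ⥤ BoolAlg.{w}) (F : ∀ X : C, Set (P.obj (op X)))
    (X : C) (a : P.obj (op X)) : Prop :=
  ∃ c : (⊤_ C) ⟶ X, P.map c.op a ∉ F (⊤_ C)

/-- The universal filter generated by a family of subsets of the fibers: the intersection of
all universal filters containing the family componentwise. -/
def genUnivFilter {C : Type u₁} [Category.{v₁} C] [HasFiniteProducts C]
    (P : Cᵒᵖ ⥤ BoolAlg.{w}) (A : ∀ X : C, Set (P.obj (op X))) :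
    ∀ X : C, Set (P.obj (op X)) := fun X =>
  {φ | ∀ G : ∀ X' : C, Set (P.obj (op X')),
    IsUniversalFilter P G → (∀ X', A X' ⊆ G X') → φ ∈ G X}

/-- The universal ideal generated by a family of subsets of the fibers: the intersection of
all universal ideals containing the family componentwise. -/
def genUnivIdeal {C : Type u₁} [Category.{v₁} C] [HasFiniteProducts C]
    (P : Cᵒᵖ ⥤ BoolAlg.{w}) (A : ∀ X : C, Set (P.obj (op X))) :
    ∀ X : C, Set (P.obj (op X)) := fun X =>
  {φ | ∀ J : ∀ X' : C, Set (P.obj (op X')),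
    IsUniversalIdeal P J → (∀ X', A X' ⊆ J X') → φ ∈ J X}

/-- The family of subsets of the fibers placing the element `α i` in the component `Y i`. -/
def familyOfPoints {C : Type u₁} [Category.{v₁} C] (P : Cᵒᵖ ⥤ BoolAlg.{w}) {ι : Type u₃}
    (Y : ι → C) (α : ∀ i, P.obj (op (Y i))) : ∀ X : C, Set (P.obj (op X)) := fun X =>
  {a | ∃ (i : ι) (h : Y i = X), a = P.map (eqToHom h.symm).op (α i)}

/-- The subsets doctrine, sending a set to its powerset Boolean algebra and a function to
its preimage map. -/
def subsetsDoctrine : (Type v)ᵒᵖ ⥤ BoolAlg.{v} where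
  obj X := BoolAlg.of (Set X.unop)
  map f :=
    BoolAlg.ofHom
    { toFun := fun S => f.unop ⁻¹' S
      map_sup' := fun _ _ => rfl
      map_inf' := fun _ _ => rfl
      map_top' := rfl
      map_bot' := rfl }
  map_id _ := rfl
  map_comp _ _ := rfl

/-- A Boolean doctrine morphism: a finite-product-preserving functor together with a
natural transformation. -/
structure DoctrineHom {C : Type u₁} [Category.{v₁} C] {D : Type u₂} [Category.{v₂} D]
    (P : Cᵒᵖ ⥤ BoolAlg.{w}) (R : Dᵒᵖ ⥤ BoolAlg.{w}) where
  functor : C ⥤ D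
  preserves : PreservesFiniteProducts functor
  trans : P ⟶ functor.op ⋙ R

/-- Composition of Boolean doctrine morphisms. -/
def DoctrineHom.comp {C : Type u₁} [Category.{v₁} C] {D : Type u₂} [Category.{v₂} D]
    {E : Type u₃} [Category.{v₃} E]
    {P : Cᵒᵖ ⥤ BoolAlg.{w}} {R : Dᵒᵖ ⥤ BoolAlg.{w}} {S : Eᵒᵖ ⥤ BoolAlg.{w}}
    (Φ : DoctrineHom P R) (Ψ : DoctrineHom R S) : DoctrineHom P S where
  functor := Φ.functor ⋙ Ψ.functor
  preserves := by
    have := Φ.preserves; have := Ψ.preserves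
    infer_instance
  trans := Φ.trans ≫ Functor.whiskerLeft Φ.functor.op Ψ.trans

/-- A first-order structure on a Boolean doctrine: fiberwise right adjoints to reindexing
along first projections, satisfying the Beck–Chevalley condition. -/
structure FOStructure {C : Type u₁} [Category.{v₁} C] [HasFiniteProducts C]
    (P : Cᵒᵖ ⥤ BoolAlg.{w}) where
  fa : ∀ X Y : C, P.obj (op (X ⨯ Y)) → P.obj (op X)
  adj : ∀ (X Y : C) (α : P.obj (op X)) (β : P.obj (op (X ⨯ Y))),
      α ≤ fa X Y β ↔ P.map (prod.fst : X ⨯ Y ⟶ X).op α ≤ β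
  bc : ∀ (X X' Y : C) (f : X' ⟶ X) (β : P.obj (op (X ⨯ Y))),
      P.map f.op (fa X Y β) = fa X' Y (P.map (prod.map f (𝟙 Y)).op β)

/-- The existential quantifier `∃ = ¬∀¬` associated to a first-order structure. -/
noncomputable def FOStructure.ex {C : Type u₁} [Category.{v₁} C] [HasFiniteProducts C]
    {P : Cᵒᵖ ⥤ BoolAlg.{w}} (fo : FOStructure P) (X Y : C)
    (β : P.obj (op (X ⨯ Y))) : P.obj (op X) :=
  (fo.fa X Y βᶜ)ᶜ

/-- The canonical comparison morphism `M X ⨯ M Y ⟶ M (X ⨯ Y)` of a Boolean doctrine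
morphism, inverse to the product comparison morphism. -/
noncomputable def DoctrineHom.prodPair {C : Type u₁} [Category.{v₁} C] [HasFiniteProducts C]
    {D : Type u₂} [Category.{v₂} D] [HasFiniteProducts D]
    {P : Cᵒᵖ ⥤ BoolAlg.{w}} {R : Dᵒᵖ ⥤ BoolAlg.{w}} (Φ : DoctrineHom P R) (X Y : C) :
    (Φ.functor.obj X ⨯ Φ.functor.obj Y) ⟶ Φ.functor.obj (X ⨯ Y) :=
  letI := Φ.preserves
  (PreservesLimitPair.iso Φ.functor X Y).inv

/-- The image of an element of `P (X ⨯ Y)` in `R (M X ⨯ M Y)`, transported along the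
canonical isomorphism `M (X ⨯ Y) ≅ M X ⨯ M Y`. -/
noncomputable def DoctrineHom.transProd {C : Type u₁} [Category.{v₁} C] [HasFiniteProducts C]
    {D : Type u₂} [Category.{v₂} D] [HasFiniteProducts D]
    {P : Cᵒᵖ ⥤ BoolAlg.{w}} {R : Dᵒᵖ ⥤ BoolAlg.{w}} (Φ : DoctrineHom P R) (X Y : C)
    (α : P.obj (op (X ⨯ Y))) : R.obj (op (Φ.functor.obj X ⨯ Φ.functor.obj Y)) :=
  R.map (Φ.prodPair X Y).op (Φ.trans.app (op (X ⨯ Y)) α)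

/-- A Boolean doctrine morphism between first-order Boolean doctrines is first-order when it
commutes with the universal quantifiers. -/
def DoctrineHom.IsFO {C : Type u₁} [Category.{v₁} C] [HasFiniteProducts C]
    {D : Type u₂} [Category.{v₂} D] [HasFiniteProducts D]
    {P : Cᵒᵖ ⥤ BoolAlg.{w}} {R : Dᵒᵖ ⥤ BoolAlg.{w}} (Φ : DoctrineHom P R)
    (foP : FOStructure P) (foR : FOStructure R) : Prop :=
  ∀ (X Y : C) (β : P.obj (op (X ⨯ Y))),
    (Φ.trans.app (op X) (foP.fa X Y β) : R.obj (op (Φ.functor.obj X))) =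
      foR.fa (Φ.functor.obj X) (Φ.functor.obj Y) (Φ.transProd X Y β)

/-- The Boolean doctrine morphism with identity functor part induced by a natural
transformation between two doctrines over the same base. -/
def idDoctrineHom {C : Type u₁} [Category.{v₁} C] {P Q : Cᵒᵖ ⥤ BoolAlg.{w}} (η : P ⟶ Q) :
    DoctrineHom P Q where
  functor := 𝟭 C
  preserves := inferInstance
  trans := η

/-- A quantifier completion of a Boolean doctrine `P`: a first-order Boolean doctrine `Q`
over the same base category together with a Boolean doctrine morphism `(𝟭 C, ι) : P ⟶ Q`
whose functor part is the identity, such that every Boolean doctrine morphism from `P` to a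
first-order Boolean doctrine factors uniquely through it via a first-order Boolean doctrine
morphism. -/
structure QuantifierCompletion.{w', v', u', v₁', u₁'} {C : Type u₁'} [Category.{v₁'} C]
    [HasFiniteProducts C] (P : Cᵒᵖ ⥤ BoolAlg.{w'}) where
  Q : Cᵒᵖ ⥤ BoolAlg.{w'}
  fo : FOStructure Q
  ι : P ⟶ Q
  univ : ∀ {D : Type u'} [Category.{v'} D] [HasFiniteProducts D]
      (R : Dᵒᵖ ⥤ BoolAlg.{w'}) (foR : FOStructure R) (Φ : DoctrineHom P R),
      ∃! Ψ : DoctrineHom Q R, Ψ.IsFO fo foR ∧ Φ = (idDoctrineHom ι).comp Ψ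

/-- A propositional model of a Boolean doctrine: a Boolean doctrine morphism to the
subsets doctrine. -/
abbrev PropModel {C : Type u} [Category.{v} C] (P : Cᵒᵖ ⥤ BoolAlg.{v}) :=
  DoctrineHom P subsetsDoctrine.{v}

/-- The subset of `M X` interpreting an element `α ∈ P X` in a propositional model. -/
def PropModel.interp {C : Type u} [Category.{v} C] {P : Cᵒᵖ ⥤ BoolAlg.{v}}
    (M : PropModel P) {X : C} (α : P.obj (op X)) : Set (M.functor.obj X) :=
  M.trans.app (op X) α



/-- The object map of a Boolean doctrine morphism. -/
abbrev DoctrineHom.onObj {C : Type u₁} [Category.{v₁} C] {D : Type u₂} [Category.{v₂} D]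
    {P : Cᵒᵖ ⥤ BoolAlg.{w}} {R : Dᵒᵖ ⥤ BoolAlg.{w}} (Φ : DoctrineHom P R) (X : C) : D :=
  Φ.functor.obj X

/-- The component at `X` of the natural transformation of a Boolean doctrine morphism,
applied to an element of the fiber. -/
abbrev DoctrineHom.appAt {C : Type u₁} [Category.{v₁} C] {D : Type u₂} [Category.{v₂} D]
    {P : Cᵒᵖ ⥤ BoolAlg.{w}} {R : Dᵒᵖ ⥤ BoolAlg.{w}} (Φ : DoctrineHom P R) (X : C)
    (a : P.obj (op X)) : R.obj (op (Φ.functor.obj X)) :=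
  Φ.trans.app (op X) a

/-!
Soundness holds in every first-order Boolean doctrine: the universal premises are instantiated
along the `gᵢ`, the existential conclusions are witnessed by the `g'ₖ`, and the existential
premises together with the negated universal conclusions combine into a single existential over
`∏ Z ⨯ ∏ W`, whose body the Herbrand inequality refutes.

For completeness, suppose no Herbrand inequality holds and put `T = S ⨯ (∏ Z ⨯ ∏ W)`. Then all
instances `αᵢ⟨pr₁, g⟩`, the generic instances of the `γ_h`, and the negations of the generic
instances of the `βⱼ` and of all instances `δₖ⟨pr₁, g'⟩` have the finite intersection property
in `P T`, so the prime ideal theorem gives a two-valued homomorphism `φ` on `P T` validating them.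
The truth sets `{f : T ⟶ X | φ (P f a)}` form a propositional model of `P` with carrier
`Hom(T, -)`; by the universal property it extends to a first-order model of `P^∀∃`, in which the
quantifiers range over morphisms out of `T`. At the generic point `pr₁ : T ⟶ S` this model
validates the left-hand side of the inequality in `P^∀∃ S` but not its right-hand side.
-/

attribute [simp] prod.lift_fst prod.lift_snd prod.lift_fst_assoc prod.lift_snd_assoc

instance (X Y : BoolAlg) : BoundedLatticeHomClass (X ⟶ Y) X Y where
  map_sup f := map_sup f.hom
  map_inf f := map_inf f.hom
  map_top f := map_top f.hom
  map_bot f := map_bot f.hom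

section Reindexing

variable {C : Type u₁} [Category.{v₁} C] {Q : Cᵒᵖ ⥤ BoolAlg.{w}}

lemma map_comp_op_apply {X Y Z : C} (f : X ⟶ Y) (g : Y ⟶ Z) (q : Q.obj (op Z)) :
    Q.map (f ≫ g).op q = Q.map f.op (Q.map g.op q) := by
  rw [op_comp, Functor.map_comp_apply]

lemma naturality_op_apply {P : Cᵒᵖ ⥤ BoolAlg.{w}} (ι : P ⟶ Q) {X Y : C} (f : X ⟶ Y)
    (a : P.obj (op Y)) : ι.app (op X) (P.map f.op a) = Q.map f.op (ι.app (op Y) a) :=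
  NatTrans.naturality_apply ι f.op a

lemma map_lift_finset_inf [HasFiniteProducts C] {S E : C} {m : ℕ} {A : Fin m → C}
    (p : E ⟶ ∏ᶜ A) (q : ∀ r, Q.obj (op (S ⨯ A r))) :
    Q.map (prod.lift prod.fst (prod.snd ≫ p) : S ⨯ E ⟶ S ⨯ ∏ᶜ A).op (Finset.univ.inf fun r =>
        Q.map (prod.lift prod.fst (prod.snd ≫ Pi.π A r) : S ⨯ ∏ᶜ A ⟶ S ⨯ A r).op (q r)) =
      Finset.univ.inf fun r =>
        Q.map (prod.lift prod.fst (prod.snd ≫ p ≫ Pi.π A r) : S ⨯ E ⟶ S ⨯ A r).op (q r) := by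
  rw [map_finset_inf]
  refine Finset.inf_congr rfl fun r _ => ?_
  rw [Function.comp_apply, ← map_comp_op_apply]
  congr 2
  simp

end Reindexing

namespace FOStructure

variable {C : Type u₁} [Category.{v₁} C] [HasFiniteProducts C] {Q : Cᵒᵖ ⥤ BoolAlg.{w}}
  (fo : FOStructure Q)

lemma map_fst_fa_le {X Y E : C} (g : X ⨯ E ⟶ Y) (b : Q.obj (op (X ⨯ Y))) :
    Q.map (prod.fst : X ⨯ E ⟶ X).op (fo.fa X Y b) ≤ Q.map (prod.lift prod.fst g).op b := by
  rw [← prod.lift_fst prod.fst g, map_comp_op_apply, prod.lift_fst]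
  exact OrderHomClass.mono _ ((fo.adj _ _ _ _).1 le_rfl)

lemma ex_le_iff (X Y : C) (b : Q.obj (op (X ⨯ Y))) (x : Q.obj (op X)) :
    fo.ex X Y b ≤ x ↔ b ≤ Q.map (prod.fst : X ⨯ Y ⟶ X).op x := by
  rw [ex, compl_le_iff_compl_le, fo.adj, map_compl', compl_le_compl_iff_le]

lemma map_le_ex {E X Y : C} (t : E ⟶ X ⨯ Y) (b : Q.obj (op (X ⨯ Y))) :
    Q.map t.op b ≤ Q.map (t ≫ prod.fst).op (fo.ex X Y b) := by
  rw [map_comp_op_apply]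
  exact OrderHomClass.mono _ ((fo.ex_le_iff _ _ _ _).1 le_rfl)

lemma ex_compl (X Y : C) (b : Q.obj (op (X ⨯ Y))) : fo.ex X Y bᶜ = (fo.fa X Y b)ᶜ := by
  rw [ex, compl_compl]

lemma map_ex {X X' : C} (Y : C) (f : X' ⟶ X) (b : Q.obj (op (X ⨯ Y))) :
    Q.map f.op (fo.ex X Y b) = fo.ex X' Y (Q.map (prod.map f (𝟙 Y)).op b) := by
  rw [ex, ex, map_compl', fo.bc, map_compl']

/-- Frobenius reciprocity. -/
lemma inf_ex_le_iff (X Y : C) (x z : Q.obj (op X)) (b : Q.obj (op (X ⨯ Y))) :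
    x ⊓ fo.ex X Y b ≤ z ↔ Q.map (prod.fst : X ⨯ Y ⟶ X).op x ⊓ b ≤ Q.map prod.fst.op z := by
  rw [inf_comm, ← le_himp_iff, fo.ex_le_iff, himp_eq, map_sup, map_compl', ← himp_eq,
    le_himp_iff, inf_comm]

lemma eq_bot_of_le_ex {X Y : C} {x : Q.obj (op X)} {b : Q.obj (op (X ⨯ Y))}
    (hx : x ≤ fo.ex X Y b) (hb : Disjoint (Q.map (prod.fst : X ⨯ Y ⟶ X).op x) b) : x = ⊥ := by
  have : x ⊓ fo.ex X Y b ≤ ⊥ := by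
    rw [inf_ex_le_iff, map_bot]
    exact disjoint_iff_inf_le.1 hb
  exact le_bot_iff.1 ((le_inf le_rfl hx).trans this)

lemma ex_le_ex_of_le_map {X U U' : C} (h : U' ⟶ U) {b : Q.obj (op (X ⨯ U))}
    {b' : Q.obj (op (X ⨯ U'))} (hb : b' ≤ Q.map (prod.lift prod.fst (prod.snd ≫ h)).op b) :
    fo.ex X U' b' ≤ fo.ex X U b := by
  rw [ex_le_iff]
  exact hb.trans ((fo.map_le_ex _ b).trans_eq (by rw [prod.lift_fst]))

lemma le_ex_prod {S U V : C} {x : Q.obj (op S)} {q : Q.obj (op (S ⨯ U))}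
    {r : Q.obj (op (S ⨯ V))} (hq : x ≤ fo.ex S U q) (hr : x ≤ fo.ex S V r) :
    x ≤ fo.ex S (U ⨯ V)
      (Q.map (prod.lift prod.fst (prod.snd ≫ prod.fst) : S ⨯ (U ⨯ V) ⟶ S ⨯ U).op q ⊓
        Q.map (prod.lift prod.fst (prod.snd ≫ prod.snd) : S ⨯ (U ⨯ V) ⟶ S ⨯ V).op r) := by
  refine (le_inf hr hq).trans ?_
  rw [inf_ex_le_iff, map_ex, inf_comm, inf_ex_le_iff, ← map_comp_op_apply]
  have e₁ : (prod.associator S U V).hom ≫ prod.lift prod.fst (prod.snd ≫ prod.fst) =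
      prod.fst := by ext <;> simp
  have e₂ : (prod.associator S U V).hom ≫ prod.lift prod.fst (prod.snd ≫ prod.snd) =
      prod.map prod.fst (𝟙 V) := by ext <;> simp
  have e₃ : (prod.associator S U V).hom ≫ prod.fst = prod.fst ≫ prod.fst := by simp
  simpa only [map_inf, ← map_comp_op_apply, e₁, e₂, e₃] using
    fo.map_le_ex (prod.associator S U V).hom
      (Q.map (prod.lift prod.fst (prod.snd ≫ prod.fst) : S ⨯ (U ⨯ V) ⟶ S ⨯ U).op q ⊓
        Q.map (prod.lift prod.fst (prod.snd ≫ prod.snd) : S ⨯ (U ⨯ V) ⟶ S ⨯ V).op r)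

lemma le_ex_pi {S : C} {m : ℕ} (A : Fin m → C) (q : ∀ r, Q.obj (op (S ⨯ A r)))
    {x : Q.obj (op S)} (hx : ∀ r, x ≤ fo.ex S (A r) (q r)) :
    x ≤ fo.ex S (∏ᶜ A) (Finset.univ.inf fun r =>
      Q.map (prod.lift prod.fst (prod.snd ≫ Pi.π A r) : S ⨯ ∏ᶜ A ⟶ S ⨯ A r).op (q r)) := by
  induction m with
  | zero =>
    have := fo.map_le_ex (prod.lift (𝟙 S) (Pi.lift fun r => r.elim0) : S ⟶ S ⨯ ∏ᶜ A) ⊤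
    rw [map_top, prod.lift_fst, op_id, Functor.map_id_apply] at this
    rw [Finset.univ_eq_empty, Finset.inf_empty]
    exact le_top.trans this
  | succ m ih =>
    let h : A 0 ⨯ ∏ᶜ (fun r : Fin m => A r.succ) ⟶ ∏ᶜ A :=
      Pi.lift (Fin.cases (motive := fun j => A 0 ⨯ ∏ᶜ (fun r : Fin m => A r.succ) ⟶ A j)
        prod.fst fun r => prod.snd ≫ Pi.π _ r)
    refine (fo.le_ex_prod (hx 0) (ih _ (fun r => q r.succ) fun r => hx r.succ)).trans
      (fo.ex_le_ex_of_le_map h ?_)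
    rw [map_lift_finset_inf, map_lift_finset_inf]
    refine Finset.le_inf fun r _ => Fin.cases (inf_le_left.trans_eq ?_)
      (fun r => inf_le_right.trans ((Finset.inf_le (Finset.mem_univ r)).trans_eq ?_)) r
    all_goals congr 2; simp [h]

end FOStructure

theorem herbrand_sound {C : Type u₁} [Category.{v₁} C] [HasFiniteProducts C]
    {Q : Cᵒᵖ ⥤ BoolAlg.{w}} (fo : FOStructure Q)
    {ibar hbar jbar kbar : ℕ} (S : C) (Y : Fin ibar → C) (W : Fin hbar → C)
    (Z : Fin jbar → C) (V : Fin kbar → C)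
    (α : ∀ i, Q.obj (op (S ⨯ Y i))) (γ : ∀ h, Q.obj (op (S ⨯ W h)))
    (β : ∀ j, Q.obj (op (S ⨯ Z j))) (δ : ∀ k, Q.obj (op (S ⨯ V k)))
    {n n' : ℕ} {l : Fin n → Fin ibar} {l' : Fin n' → Fin kbar}
    (g : ∀ i : Fin n, (S ⨯ ((∏ᶜ Z) ⨯ (∏ᶜ W))) ⟶ Y (l i))
    (g' : ∀ k : Fin n', (S ⨯ ((∏ᶜ Z) ⨯ (∏ᶜ W))) ⟶ V (l' k))
    (hH : (Finset.univ.inf fun i =>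
            Q.map (prod.lift (prod.fst : S ⨯ ((∏ᶜ Z) ⨯ (∏ᶜ W)) ⟶ S) (g i)).op (α (l i))) ⊓
          (Finset.univ.inf fun h =>
            Q.map (prod.lift (prod.fst : S ⨯ ((∏ᶜ Z) ⨯ (∏ᶜ W)) ⟶ S)
              ((prod.snd : S ⨯ ((∏ᶜ Z) ⨯ (∏ᶜ W)) ⟶ (∏ᶜ Z) ⨯ (∏ᶜ W)) ≫
                (prod.snd : (∏ᶜ Z) ⨯ (∏ᶜ W) ⟶ ∏ᶜ W) ≫ Pi.π W h)).op (γ h)) ≤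
        (Finset.univ.sup fun j =>
            Q.map (prod.lift (prod.fst : S ⨯ ((∏ᶜ Z) ⨯ (∏ᶜ W)) ⟶ S)
              ((prod.snd : S ⨯ ((∏ᶜ Z) ⨯ (∏ᶜ W)) ⟶ (∏ᶜ Z) ⨯ (∏ᶜ W)) ≫
                (prod.fst : (∏ᶜ Z) ⨯ (∏ᶜ W) ⟶ ∏ᶜ Z) ≫ Pi.π Z j)).op (β j)) ⊔
          Finset.univ.sup fun k =>
            Q.map (prod.lift (prod.fst : S ⨯ ((∏ᶜ Z) ⨯ (∏ᶜ W)) ⟶ S) (g' k)).op (δ (l' k))) :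
    (Finset.univ.inf fun i => fo.fa S (Y i) (α i)) ⊓
        (Finset.univ.inf fun h => fo.ex S (W h) (γ h)) ≤
      (Finset.univ.sup fun j => fo.fa S (Z j) (β j)) ⊔
        Finset.univ.sup fun k => fo.ex S (V k) (δ k) := by
  set x := ((Finset.univ.inf fun i => fo.fa S (Y i) (α i)) ⊓
    (Finset.univ.inf fun h => fo.ex S (W h) (γ h))) ⊓
      ((Finset.univ.sup fun j => fo.fa S (Z j) (β j)) ⊔
        Finset.univ.sup fun k => fo.ex S (V k) (δ k))ᶜ
  suffices x = ⊥ from disjoint_compl_right_iff.1 (disjoint_iff.2 this)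
  have hxα : ∀ i, x ≤ fo.fa S (Y i) (α i) :=
    fun i => inf_le_left.trans (inf_le_left.trans (Finset.inf_le (Finset.mem_univ i)))
  have hxγ : ∀ h, x ≤ fo.ex S (W h) (γ h) :=
    fun h => inf_le_left.trans (inf_le_right.trans (Finset.inf_le (Finset.mem_univ h)))
  have hxβ : ∀ j, x ≤ fo.ex S (Z j) (β j)ᶜ := fun j => by
    rw [fo.ex_compl]
    exact inf_le_right.trans (compl_le_compl
      (le_sup_left.trans' (Finset.le_sup_of_le (Finset.mem_univ j) le_rfl)))
  have hxδ : ∀ k, fo.ex S (V k) (δ k) ≤ xᶜ := fun k => le_compl_comm.1 (inf_le_right.trans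
    (compl_le_compl (le_sup_right.trans' (Finset.le_sup_of_le (Finset.mem_univ k) le_rfl))))
  have hex := fo.le_ex_prod (fo.le_ex_pi Z _ hxβ) (fo.le_ex_pi W _ hxγ)
  rw [map_lift_finset_inf, map_lift_finset_inf] at hex
  refine fo.eq_bot_of_le_ex hex (disjoint_iff_inf_le.2 ?_)
  have hα : Q.map prod.fst.op x ≤ Finset.univ.inf fun i =>
      Q.map (prod.lift (prod.fst : S ⨯ ((∏ᶜ Z) ⨯ (∏ᶜ W)) ⟶ S) (g i)).op (α (l i)) :=
    Finset.le_inf fun i _ =>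
      (OrderHomClass.mono _ (hxα (l i))).trans (fo.map_fst_fa_le (g i) (α (l i)))
  have hδ : Q.map prod.fst.op x ≤ (Finset.univ.sup fun k =>
      Q.map (prod.lift (prod.fst : S ⨯ ((∏ᶜ Z) ⨯ (∏ᶜ W)) ⟶ S) (g' k)).op (δ (l' k)))ᶜ := by
    rw [Finset.compl_sup]
    refine Finset.le_inf fun k _ => le_compl_comm.1 ?_
    refine (fo.map_le_ex (prod.lift prod.fst (g' k)) _).trans ?_
    rw [prod.lift_fst, ← map_compl']
    exact OrderHomClass.mono _ (hxδ (l' k))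
  calc _ ≤ (_ ⊓ _) ⊓ (_ ⊔ _)ᶜ := by
        simp only [map_compl', ← Finset.compl_sup, compl_sup]
        exact le_inf (inf_le_inf hα inf_le_right)
          (le_inf (inf_le_right.trans inf_le_left) (inf_le_left.trans hδ))
    _ ≤ (_ ⊔ _) ⊓ (_ ⊔ _)ᶜ := inf_le_inf_right _ hH
    _ = ⊥ := inf_compl_eq_bot

theorem exists_boundedLatticeHom_Prop_of_finset_inf_ne_bot {B : Type*} [BooleanAlgebra B]
    {κ : Type*} (G : κ → B) (hG : ∀ s : Finset κ, s.inf G ≠ ⊥) :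
    ∃ φ : BoundedLatticeHom B Prop, ∀ k, φ (G k) := by
  classical
  let F : Order.PFilter B := Order.IsPFilter.toPFilter (F := {x | ∃ s : Finset κ, s.inf G ≤ x})
    (.of_def ⟨⊤, ∅, le_top⟩
      (fun _ ⟨s, hs⟩ _ ⟨t, ht⟩ => ⟨(s ∪ t).inf G, ⟨s ∪ t, le_rfl⟩,
        by rw [Finset.inf_union]; exact inf_le_left.trans hs,
        by rw [Finset.inf_union]; exact inf_le_right.trans ht⟩)
      (fun hxy ⟨s, hs⟩ => ⟨s, hs.trans hxy⟩))
  have hFI : Disjoint (F : Set B) (Order.Ideal.principal (⊥ : B) : Set B) :=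
    Set.disjoint_left.2 fun _ ⟨s, hs⟩ hx => hG s (le_bot_iff.1 (hs.trans hx))
  obtain ⟨J, hJ, -, hFJ⟩ := DistribLattice.prime_ideal_of_disjoint_filter_ideal hFI
  have hF : ∀ {x}, (∃ s : Finset κ, s.inf G ≤ x) → x ∉ J := fun hx => Set.disjoint_left.1 hFJ hx
  refine ⟨{ toFun := fun x => x ∉ J
            map_sup' := fun x y => by simp only [Order.Ideal.sup_mem_iff, not_and_or]; rfl
            map_inf' := fun x y => propext ⟨fun h => ⟨fun hx => h (J.lower inf_le_left hx),
                fun hy => h (J.lower inf_le_right hy)⟩,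
              fun ⟨hx, hy⟩ hxy => (hJ.mem_or_mem hxy).elim hx hy⟩
            map_top' := eq_true (hF ⟨∅, le_rfl⟩)
            map_bot' := eq_false (not_not.2 J.bot_mem) }, fun k => hF ⟨{k}, by simp⟩⟩

section SubsetsDoctrine

/-- The fibres of `subsetsDoctrine` are bundled, so `Set` membership is not found on them. -/
instance {X : Type v} : Membership X (subsetsDoctrine.{v}.obj (op X)) :=
  ⟨fun (σ : Set X) x => x ∈ σ⟩

lemma mem_subsetsDoctrine_map {X Y : Type v} (f : X ⟶ Y) (σ : subsetsDoctrine.obj (op Y))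
    (x : X) : x ∈ subsetsDoctrine.map f.op σ ↔ f x ∈ σ :=
  Iff.rfl

lemma binaryProductIso_inv_fst_snd {X Y : Type v} (p : X ⨯ Y) :
    (Types.binaryProductIso X Y).inv ((prod.fst : X ⨯ Y ⟶ X) p, (prod.snd : X ⨯ Y ⟶ Y) p) = p := by
  rw [← Types.binaryProductIso_hom_comp_fst_apply, ← Types.binaryProductIso_hom_comp_snd_apply]
  exact (Types.binaryProductIso X Y).hom_inv_id_apply p

lemma types_prod_ext {X Y : Type v} {p q : X ⨯ Y}
    (h₁ : (prod.fst : X ⨯ Y ⟶ X) p = (prod.fst : X ⨯ Y ⟶ X) q)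
    (h₂ : (prod.snd : X ⨯ Y ⟶ Y) p = (prod.snd : X ⨯ Y ⟶ Y) q) : p = q := by
  rw [← binaryProductIso_inv_fst_snd p, ← binaryProductIso_inv_fst_snd q, h₁, h₂]

lemma prod_map_binaryProductIso_inv {X X' Y : Type v} (f : X' ⟶ X) (x : X') (y : Y) :
    prod.map f (𝟙 Y) ((Types.binaryProductIso X' Y).inv (x, y)) =
      (Types.binaryProductIso X Y).inv (f x, y) := by
  have h₁ := ConcreteCategory.congr_hom (prod.map_fst f (𝟙 Y))
    ((Types.binaryProductIso X' Y).inv (x, y))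
  have h₂ := ConcreteCategory.congr_hom (prod.map_snd f (𝟙 Y))
    ((Types.binaryProductIso X' Y).inv (x, y))
  simp only [ConcreteCategory.comp_apply] at h₁ h₂
  apply types_prod_ext <;> simp [h₁, h₂]

noncomputable def subsetsFO : FOStructure subsetsDoctrine.{v} where
  fa X Y σ := {x | ∀ y, (Types.binaryProductIso X Y).inv (x, y) ∈ σ}
  adj X Y σ τ := ⟨fun h p hp => binaryProductIso_inv_fst_snd p ▸ h hp _,
    fun h x hx y => h (show (prod.fst : X ⨯ Y ⟶ X) _ ∈ σ by
      rw [Types.binaryProductIso_inv_comp_fst_apply]; exact hx)⟩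
  bc X X' Y f τ := Set.ext fun x => forall_congr' fun y => by
    rw [mem_subsetsDoctrine_map, prod_map_binaryProductIso_inv]
    rfl

end SubsetsDoctrine

namespace PropModel

variable {C : Type u} [Category.{v} C] {P : Cᵒᵖ ⥤ BoolAlg.{v}} (M : PropModel P) {X : C}

lemma interp_mono {a b : P.obj (op X)} (h : a ≤ b) : M.interp a ⊆ M.interp b :=
  OrderHomClass.mono (M.trans.app (op X)) h

lemma interp_inf (a b : P.obj (op X)) : M.interp (a ⊓ b) = M.interp a ∩ M.interp b :=
  map_inf (β := (M.functor.op ⋙ subsetsDoctrine).obj (op X)) (M.trans.app (op X)) a b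

lemma interp_sup (a b : P.obj (op X)) : M.interp (a ⊔ b) = M.interp a ∪ M.interp b :=
  map_sup (β := (M.functor.op ⋙ subsetsDoctrine).obj (op X)) (M.trans.app (op X)) a b

lemma interp_compl (a : P.obj (op X)) : M.interp aᶜ = (M.interp a)ᶜ :=
  map_compl' (M.trans.app (op X)) a

lemma interp_finset_inf {ι : Type*} (s : Finset ι) (a : ι → P.obj (op X)) :
    M.interp (s.inf a) = ⋂ i ∈ s, M.interp (a i) :=
  (map_finset_inf (M.trans.app (op X)) s a).trans (Finset.inf_set_eq_iInter _ _)

lemma interp_finset_sup {ι : Type*} (s : Finset ι) (a : ι → P.obj (op X)) :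
    M.interp (s.sup a) = ⋃ i ∈ s, M.interp (a i) :=
  (map_finset_sup (M.trans.app (op X)) s a).trans (Finset.sup_set_eq_biUnion _ _)

end PropModel

section RepresentableModel

variable {C : Type u} [Category.{v} C] {P Q : Cᵒᵖ ⥤ BoolAlg.{v}} {T : C}

def truthSets (P : Cᵒᵖ ⥤ BoolAlg.{v}) (φ : BoundedLatticeHom (P.obj (op T)) Prop) :
    P ⟶ (coyoneda.obj (op T)).op ⋙ subsetsDoctrine.{v} where
  app X := BoolAlg.ofHom
    { toFun a := {f | φ (P.map f.op a)}
      map_sup' a b := by ext; simp only [map_sup]; rfl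
      map_inf' a b := by ext; simp only [map_inf]; rfl
      map_top' := by ext; simp only [map_top]; rfl
      map_bot' := by ext; simp only [map_bot]; rfl }
  naturality X X' h := by
    ext a
    refine Set.ext fun f => ?_
    show φ (P.map f.op (P.map h a)) ↔ φ (P.map (f ≫ h.unop).op a)
    rw [op_comp, Quiver.Hom.op_unop, P.map_comp]
    rfl

-- Reducible, so that elements of its carrier unify with morphisms out of `T`.
abbrev representableModel (T : C) (θ : Q ⟶ (coyoneda.obj (op T)).op ⋙ subsetsDoctrine.{v}) :
    PropModel Q where
  functor := coyoneda.obj (op T)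
  preserves := inferInstance
  trans := θ

variable {θ : Q ⟶ (coyoneda.obj (op T)).op ⋙ subsetsDoctrine.{v}}

lemma representableModel_mem_interp_comp {ι : P ⟶ Q} {φ : BoundedLatticeHom (P.obj (op T)) Prop}
    (hι : ι ≫ θ = truthSets P φ) {X : C} (a : P.obj (op X)) (f : T ⟶ X) :
    f ∈ (representableModel T θ).interp (ι.app (op X) a) ↔ φ (P.map f.op a) :=
  Set.ext_iff.1 (congrArg (fun η => η.app (op X) a) hι) f

variable [HasFiniteProducts C]

lemma representableModel_prodPair {X Y : C} (f : T ⟶ X) (g : T ⟶ Y) :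
    (representableModel T θ).prodPair X Y ((Types.binaryProductIso (T ⟶ X) (T ⟶ Y)).inv (f, g)) =
      prod.lift f g := by
  have : (Types.binaryProductIso _ _).inv (f, g) =
      prodComparison (coyoneda.obj (op T)) X Y (prod.lift f g) := by
    apply types_prod_ext
    · simpa using (ConcreteCategory.congr_hom
        (prodComparison_fst (coyoneda.obj (op T)) X Y) (prod.lift f g)).symm
    · simpa using (ConcreteCategory.congr_hom
        (prodComparison_snd (coyoneda.obj (op T)) X Y) (prod.lift f g)).symm
  rw [this]
  exact (PreservesLimitPair.iso (coyoneda.obj (op T)) X Y).hom_inv_id_apply _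

variable (fo : FOStructure Q) (hθ : (representableModel T θ).IsFO fo subsetsFO)
include hθ

lemma representableModel_mem_interp_fa {X Y : C} (q : Q.obj (op (X ⨯ Y))) (f : T ⟶ X) :
    f ∈ (representableModel T θ).interp (fo.fa X Y q) ↔
      ∀ g : T ⟶ Y, prod.lift f g ∈ (representableModel T θ).interp q := by
  rw [PropModel.interp, hθ X Y q]
  refine forall_congr' fun g => ?_
  show (representableModel T θ).prodPair X Y ((Types.binaryProductIso (T ⟶ X) (T ⟶ Y)).inv (f, g))
    ∈ (representableModel T θ).interp q ↔ _
  rw [representableModel_prodPair]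

lemma representableModel_mem_interp_ex {X Y : C} (q : Q.obj (op (X ⨯ Y))) (f : T ⟶ X) :
    f ∈ (representableModel T θ).interp (fo.ex X Y q) ↔
      ∃ g : T ⟶ Y, prod.lift f g ∈ (representableModel T θ).interp q := by
  rw [FOStructure.ex, PropModel.interp_compl, Set.mem_compl_iff,
    representableModel_mem_interp_fa fo hθ]
  simp [PropModel.interp_compl]

end RepresentableModel

theorem QuantifierCompletion.exists_fo_extension {C : Type u} [SmallCategory C]
    [HasFiniteProducts C] {P : Cᵒᵖ ⥤ BoolAlg.{u}}
    (qc : QuantifierCompletion.{u, u, u + 1, u, u} P) (M : PropModel P) :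
    ∃ θ : qc.Q ⟶ M.functor.op ⋙ subsetsDoctrine.{u},
      qc.ι ≫ θ = M.trans ∧ DoctrineHom.IsFO ⟨M.functor, M.preserves, θ⟩ qc.fo subsetsFO := by
  obtain ⟨⟨F, hF, θ⟩, ⟨hFO, hfac⟩, -⟩ := qc.univ subsetsDoctrine.{u} subsetsFO M
  -- Destructuring `M` makes the equality of carrier functors a substitution.
  obtain ⟨G, hG, η⟩ := M
  obtain ⟨rfl, hη⟩ := DoctrineHom.mk.inj hfac
  exact ⟨θ, (eq_of_heq hη).symm, hFO⟩

section Herbrand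

variable {C : Type u₁} [Category.{v₁} C] [HasFiniteProducts C] (P : Cᵒᵖ ⥤ BoolAlg.{w})
  {ibar hbar jbar kbar : ℕ} (S : C) (Y : Fin ibar → C) (W : Fin hbar → C)
  (Z : Fin jbar → C) (V : Fin kbar → C)
  (α : ∀ i, P.obj (op (S ⨯ Y i))) (γ : ∀ h, P.obj (op (S ⨯ W h)))
  (β : ∀ j, P.obj (op (S ⨯ Z j))) (δ : ∀ k, P.obj (op (S ⨯ V k)))

/-- What a countermodel of every Herbrand inequality has to validate at the generic point of
`S ⨯ (∏ Z ⨯ ∏ W)`. -/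
noncomputable def herbrandInstances :
    (Σ i, S ⨯ ((∏ᶜ Z) ⨯ (∏ᶜ W)) ⟶ Y i) ⊕ Fin hbar ⊕ Fin jbar ⊕
        (Σ k, S ⨯ ((∏ᶜ Z) ⨯ (∏ᶜ W)) ⟶ V k) → P.obj (op (S ⨯ ((∏ᶜ Z) ⨯ (∏ᶜ W)))) :=
  Sum.elim (fun p => P.map (prod.lift prod.fst p.2).op (α p.1))
    (Sum.elim (fun h => P.map (prod.lift prod.fst (prod.snd ≫ prod.snd ≫ Pi.π W h)).op (γ h))
      (Sum.elim (fun j => (P.map (prod.lift prod.fst (prod.snd ≫ prod.fst ≫ Pi.π Z j)).op (β j))ᶜ)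
        fun p => (P.map (prod.lift prod.fst p.2).op (δ p.1))ᶜ))

lemma finset_inf_herbrandInstances_ne_bot
    (hno : ¬ ∃ (n n' : ℕ) (l : Fin n → Fin ibar) (l' : Fin n' → Fin kbar)
      (g : ∀ i : Fin n, (S ⨯ ((∏ᶜ Z) ⨯ (∏ᶜ W))) ⟶ Y (l i))
      (g' : ∀ k : Fin n', (S ⨯ ((∏ᶜ Z) ⨯ (∏ᶜ W))) ⟶ V (l' k)),
      (Finset.univ.inf fun i =>
          P.map (prod.lift (prod.fst : S ⨯ ((∏ᶜ Z) ⨯ (∏ᶜ W)) ⟶ S) (g i)).op (α (l i))) ⊓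
        (Finset.univ.inf fun h =>
          P.map (prod.lift (prod.fst : S ⨯ ((∏ᶜ Z) ⨯ (∏ᶜ W)) ⟶ S)
            ((prod.snd : S ⨯ ((∏ᶜ Z) ⨯ (∏ᶜ W)) ⟶ (∏ᶜ Z) ⨯ (∏ᶜ W)) ≫
              (prod.snd : (∏ᶜ Z) ⨯ (∏ᶜ W) ⟶ ∏ᶜ W) ≫ Pi.π W h)).op (γ h)) ≤
      (Finset.univ.sup fun j =>
          P.map (prod.lift (prod.fst : S ⨯ ((∏ᶜ Z) ⨯ (∏ᶜ W)) ⟶ S)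
            ((prod.snd : S ⨯ ((∏ᶜ Z) ⨯ (∏ᶜ W)) ⟶ (∏ᶜ Z) ⨯ (∏ᶜ W)) ≫
              (prod.fst : (∏ᶜ Z) ⨯ (∏ᶜ W) ⟶ ∏ᶜ Z) ≫ Pi.π Z j)).op (β j)) ⊔
        Finset.univ.sup fun k =>
          P.map (prod.lift (prod.fst : S ⨯ ((∏ᶜ Z) ⨯ (∏ᶜ W)) ⟶ S) (g' k)).op (δ (l' k)))
    (s : Finset _) : s.inf (herbrandInstances P S Y W Z V α γ β δ) ≠ ⊥ := by
  classical
  intro hs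
  apply hno
  let LY := s.toLeft.toList
  let LV := s.toRight.toRight.toRight.toList
  refine ⟨LY.length, LV.length, fun t => (LY.get t).1, fun t => (LV.get t).1,
    fun t => (LY.get t).2, fun t => (LV.get t).2, ?_⟩
  rw [← disjoint_compl_right_iff, disjoint_iff, ← le_bot_iff, ← hs]
  refine Finset.le_inf ?_
  rintro (⟨i, f⟩ | h | j | ⟨k, f⟩) hk
  · obtain ⟨t, ht⟩ := List.mem_iff_get.1 (Finset.mem_toList.2 (Finset.mem_toLeft.2 hk))
    exact inf_le_left.trans (inf_le_left.trans ((Finset.inf_le (Finset.mem_univ t)).trans_eq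
      (congrArg (fun p => herbrandInstances P S Y W Z V α γ β δ (.inl p)) ht)))
  · exact inf_le_left.trans (inf_le_right.trans (Finset.inf_le (Finset.mem_univ h)))
  · exact inf_le_right.trans
      (compl_le_compl (le_sup_left.trans' (Finset.le_sup_of_le (Finset.mem_univ j) le_rfl)))
  · obtain ⟨t, ht⟩ := List.mem_iff_get.1 (Finset.mem_toList.2
      (Finset.mem_toRight.2 (Finset.mem_toRight.2 (Finset.mem_toRight.2 hk))))
    exact inf_le_right.trans (compl_le_compl (le_sup_right.trans' ((Finset.le_sup
      (Finset.mem_univ t)).trans_eq' (congrArg (fun p => P.map (prod.lift prod.fst p.2).op (δ p.1)) ht))))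

end Herbrand

theorem herbrand_complete {C : Type u} [SmallCategory C] [HasFiniteProducts C]
    (P : Cᵒᵖ ⥤ BoolAlg.{u}) (qc : QuantifierCompletion.{u, u, u + 1, u, u} P)
    {ibar hbar jbar kbar : ℕ} (S : C) (Y : Fin ibar → C) (W : Fin hbar → C)
    (Z : Fin jbar → C) (V : Fin kbar → C)
    (α : ∀ i, P.obj (op (S ⨯ Y i))) (γ : ∀ h, P.obj (op (S ⨯ W h)))
    (β : ∀ j, P.obj (op (S ⨯ Z j))) (δ : ∀ k, P.obj (op (S ⨯ V k)))
    (hQ : (Finset.univ.inf fun i => qc.fo.fa S (Y i) (qc.ι.app (op (S ⨯ Y i)) (α i))) ⊓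
        (Finset.univ.inf fun h => qc.fo.ex S (W h) (qc.ι.app (op (S ⨯ W h)) (γ h))) ≤
      (Finset.univ.sup fun j => qc.fo.fa S (Z j) (qc.ι.app (op (S ⨯ Z j)) (β j))) ⊔
        Finset.univ.sup fun k => qc.fo.ex S (V k) (qc.ι.app (op (S ⨯ V k)) (δ k))) :
    ∃ (n n' : ℕ) (l : Fin n → Fin ibar) (l' : Fin n' → Fin kbar)
      (g : ∀ i : Fin n, (S ⨯ ((∏ᶜ Z) ⨯ (∏ᶜ W))) ⟶ Y (l i))
      (g' : ∀ k : Fin n', (S ⨯ ((∏ᶜ Z) ⨯ (∏ᶜ W))) ⟶ V (l' k)),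
      (Finset.univ.inf fun i =>
          P.map (prod.lift (prod.fst : S ⨯ ((∏ᶜ Z) ⨯ (∏ᶜ W)) ⟶ S) (g i)).op (α (l i))) ⊓
        (Finset.univ.inf fun h =>
          P.map (prod.lift (prod.fst : S ⨯ ((∏ᶜ Z) ⨯ (∏ᶜ W)) ⟶ S)
            ((prod.snd : S ⨯ ((∏ᶜ Z) ⨯ (∏ᶜ W)) ⟶ (∏ᶜ Z) ⨯ (∏ᶜ W)) ≫
              (prod.snd : (∏ᶜ Z) ⨯ (∏ᶜ W) ⟶ ∏ᶜ W) ≫ Pi.π W h)).op (γ h)) ≤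
      (Finset.univ.sup fun j =>
          P.map (prod.lift (prod.fst : S ⨯ ((∏ᶜ Z) ⨯ (∏ᶜ W)) ⟶ S)
            ((prod.snd : S ⨯ ((∏ᶜ Z) ⨯ (∏ᶜ W)) ⟶ (∏ᶜ Z) ⨯ (∏ᶜ W)) ≫
              (prod.fst : (∏ᶜ Z) ⨯ (∏ᶜ W) ⟶ ∏ᶜ Z) ≫ Pi.π Z j)).op (β j)) ⊔
        Finset.univ.sup fun k =>
          P.map (prod.lift (prod.fst : S ⨯ ((∏ᶜ Z) ⨯ (∏ᶜ W)) ⟶ S) (g' k)).op (δ (l' k)) := by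
  by_contra hno
  set T := S ⨯ ((∏ᶜ Z) ⨯ (∏ᶜ W))
  obtain ⟨φ, hφ⟩ := exists_boundedLatticeHom_Prop_of_finset_inf_ne_bot _
    (finset_inf_herbrandInstances_ne_bot P S Y W Z V α γ β δ hno)
  have hφc : ∀ x, φ xᶜ → ¬ φ x := fun x h => by rwa [map_compl'] at h
  obtain ⟨θ, hι, hθ⟩ := qc.exists_fo_extension (representableModel T (truthSets P φ))
  have hgen : (prod.fst : T ⟶ S) ∈ (representableModel T θ).interp
      ((Finset.univ.inf fun i => qc.fo.fa S (Y i) (qc.ι.app (op (S ⨯ Y i)) (α i))) ⊓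
        (Finset.univ.inf fun h => qc.fo.ex S (W h) (qc.ι.app (op (S ⨯ W h)) (γ h)))) := by
    simp only [PropModel.interp_inf, PropModel.interp_finset_inf, Set.mem_inter_iff,
      Set.mem_iInter, representableModel_mem_interp_fa qc.fo hθ,
      representableModel_mem_interp_ex qc.fo hθ, representableModel_mem_interp_comp hι]
    exact ⟨fun i _ g => hφ (.inl ⟨i, g⟩), fun h _ => ⟨_, hφ (.inr (.inl h))⟩⟩
  have hR := PropModel.interp_mono (representableModel T θ) (X := S) hQ hgen
  simp only [PropModel.interp_sup, PropModel.interp_finset_sup, Set.mem_union, Set.mem_iUnion,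
    representableModel_mem_interp_fa qc.fo hθ, representableModel_mem_interp_ex qc.fo hθ,
    representableModel_mem_interp_comp hι] at hR
  rcases hR with ⟨j, -, hj⟩ | ⟨k, -, g, hk⟩
  · exact hφc _ (hφ (.inr (.inr (.inl j)))) (hj _)
  · exact hφc _ (hφ (.inr (.inr (.inr ⟨k, g⟩)))) hk

theorem stmt5 {C : Type u} [SmallCategory C] [HasFiniteProducts C]
    (P : Cᵒᵖ ⥤ BoolAlg.{u}) (qc : QuantifierCompletion.{u, u, u + 1, u, u} P)
    {ibar hbar jbar kbar : ℕ} (S : C) (Y : Fin ibar → C) (W : Fin hbar → C)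
    (Z : Fin jbar → C) (V : Fin kbar → C)
    (α : ∀ i, P.obj (op (S ⨯ Y i))) (γ : ∀ h, P.obj (op (S ⨯ W h)))
    (β : ∀ j, P.obj (op (S ⨯ Z j))) (δ : ∀ k, P.obj (op (S ⨯ V k))) :
    ((Finset.univ.inf fun i => qc.fo.fa S (Y i) (qc.ι.app (op (S ⨯ Y i)) (α i))) ⊓
        (Finset.univ.inf fun h => qc.fo.ex S (W h) (qc.ι.app (op (S ⨯ W h)) (γ h))) ≤
      (Finset.univ.sup fun j => qc.fo.fa S (Z j) (qc.ι.app (op (S ⨯ Z j)) (β j))) ⊔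
        Finset.univ.sup fun k => qc.fo.ex S (V k) (qc.ι.app (op (S ⨯ V k)) (δ k))) ↔
      ∃ (n n' : ℕ) (l : Fin n → Fin ibar) (l' : Fin n' → Fin kbar)
        (g : ∀ i : Fin n, (S ⨯ ((∏ᶜ Z) ⨯ (∏ᶜ W))) ⟶ Y (l i))
        (g' : ∀ k : Fin n', (S ⨯ ((∏ᶜ Z) ⨯ (∏ᶜ W))) ⟶ V (l' k)),
        (Finset.univ.inf fun i =>
            P.map (prod.lift (prod.fst : S ⨯ ((∏ᶜ Z) ⨯ (∏ᶜ W)) ⟶ S) (g i)).op (α (l i))) ⊓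
          (Finset.univ.inf fun h =>
            P.map (prod.lift (prod.fst : S ⨯ ((∏ᶜ Z) ⨯ (∏ᶜ W)) ⟶ S)
              ((prod.snd : S ⨯ ((∏ᶜ Z) ⨯ (∏ᶜ W)) ⟶ (∏ᶜ Z) ⨯ (∏ᶜ W)) ≫
                (prod.snd : (∏ᶜ Z) ⨯ (∏ᶜ W) ⟶ ∏ᶜ W) ≫ Pi.π W h)).op (γ h)) ≤
        (Finset.univ.sup fun j =>
            P.map (prod.lift (prod.fst : S ⨯ ((∏ᶜ Z) ⨯ (∏ᶜ W)) ⟶ S)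
              ((prod.snd : S ⨯ ((∏ᶜ Z) ⨯ (∏ᶜ W)) ⟶ (∏ᶜ Z) ⨯ (∏ᶜ W)) ≫
                (prod.fst : (∏ᶜ Z) ⨯ (∏ᶜ W) ⟶ ∏ᶜ Z) ≫ Pi.π Z j)).op (β j)) ⊔
          Finset.univ.sup fun k =>
            P.map (prod.lift (prod.fst : S ⨯ ((∏ᶜ Z) ⨯ (∏ᶜ W)) ⟶ S) (g' k)).op
              (δ (l' k)) := by
  refine ⟨herbrand_complete P qc S Y W Z V α γ β δ, fun ⟨n, n', l, l', g, g', hH⟩ => ?_⟩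
  refine herbrand_sound qc.fo S Y W Z V _ _ _ _ g g' ?_
  simpa only [map_inf, map_sup, map_finset_inf, map_finset_sup, Function.comp_def,
    naturality_op_apply] using OrderHomClass.mono (ConcreteCategory.hom (qc.ι.app (op _))) hH

end BooleanDoctrine
end

section
/- (∀ distributes over finite joins with disjoint variables.) Let P : Cᵒᵖ → BoolAlg be a first-order Boolean doctrine over a category C with finite products, let n ∈ ℕ, let X₁, …, X_n ∈ C, and let αᵢ ∈ P(Xᵢ) for i = 1, …, n. Then in P(t) one has ⋁_{i=1}^{n} ∀_t^{Xᵢ}(αᵢ) = ∀_t^{∏ᵢXᵢ}(⋁_{i=1}^{n} P(prᵢ)(αᵢ)), where for α ∈ P(X), ∀_t^X(α) denotes the image of α under the right adjoint ∀_t^X : P(t×X) → P(t) after transporting along the canonical isomorphism X ≅ t×X (in particular, for n = 0 this asserts ⊥ = ∀_t^t(⊥) in P(t)). -/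
open CategoryTheory CategoryTheory.Limits Opposite

universe w v u v₁ u₁ v₂ u₂ v₃ u₃

namespace BooleanDoctrine

/-! The binary case is the law `∀x ∀y (β x ∨ γ y) = ∀x β ∨ ∀y γ`. Splitting `∀` over `X ⨯ Y` into
`∀` over `X` followed by `∀` over `Y`, it reduces to `∀y (β ∨ γ) = β ∨ ∀y γ` for `γ` not depending
on `y`, which holds in any Boolean fiber because `(β ∨ γ) \ γ ≤ β`, and to Beck–Chevalley, which
identifies `∀y γ` reindexed along `T ⨯ X ⟶ T` with `∀y` of the reindexed `γ`. The `n`-ary case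
follows by induction over an arbitrary base `T`; for `n = 0`, `∀` of `⊥` over the empty product is
`⊥` because `T` maps into that product. -/

section

variable {C : Type u₁} [Category.{v₁} C] {P : Cᵒᵖ ⥤ BoolAlg.{w}}

lemma reindex_sup {X Y : C} (f : X ⟶ Y) (a b : P.obj (op Y)) :
    P.map f.op (a ⊔ b) = P.map f.op a ⊔ P.map f.op b :=
  map_sup (P.map f.op).hom a b

lemma reindex_bot {X Y : C} (f : X ⟶ Y) : P.map f.op (⊥ : P.obj (op Y)) = ⊥ :=
  map_bot (P.map f.op).hom

lemma reindex_sdiff {X Y : C} (f : X ⟶ Y) (a b : P.obj (op Y)) :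
    P.map f.op (a \ b) = P.map f.op a \ P.map f.op b :=
  map_sdiff' (P.map f.op).hom a b

lemma reindex_finset_sup {X Y : C} (f : X ⟶ Y) {ι : Type*} (s : Finset ι)
    (g : ι → P.obj (op Y)) :
    P.map f.op (s.sup g) = s.sup fun i => P.map f.op (g i) :=
  map_finset_sup (P.map f.op).hom s g

lemma reindex_mono {X Y : C} (f : X ⟶ Y) {a b : P.obj (op Y)} (h : a ≤ b) :
    P.map f.op a ≤ P.map f.op b :=
  OrderHomClass.mono (P.map f.op).hom h

lemma reindex_comp {X Y Z : C} (f : X ⟶ Y) (g : Y ⟶ Z) (a : P.obj (op Z)) :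
    P.map (f ≫ g).op a = P.map f.op (P.map g.op a) := by
  rw [op_comp, P.map_comp]; rfl

lemma reindex_id {X : C} (a : P.obj (op X)) : P.map (𝟙 X).op a = a := by
  rw [op_id, P.map_id]; rfl

variable [HasFiniteProducts C] (fo : FOStructure P)

lemma fa_counit (X Y : C) (β : P.obj (op (X ⨯ Y))) :
    P.map (prod.fst : X ⨯ Y ⟶ X).op (fo.fa X Y β) ≤ β :=
  (fo.adj X Y _ β).1 le_rfl

lemma fa_mono (X Y : C) {β β' : P.obj (op (X ⨯ Y))} (h : β ≤ β') :
    fo.fa X Y β ≤ fo.fa X Y β' :=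
  (fo.adj X Y _ β').2 ((fa_counit fo X Y β).trans h)

lemma fa_bot_of_hom {X Y : C} (c : X ⟶ Y) : fo.fa X Y ⊥ = ⊥ := by
  refine le_bot_iff.1 ?_
  have h := reindex_mono (prod.lift (𝟙 X) c) (fa_counit fo X Y ⊥)
  rwa [← reindex_comp, prod.lift_fst, reindex_id, reindex_bot] at h

lemma fa_le_fa_reindex (X : C) {Y Z : C} (h : Z ⟶ Y) (β : P.obj (op (X ⨯ Y))) :
    fo.fa X Y β ≤ fo.fa X Z (P.map (prod.map (𝟙 X) h).op β) := by
  rw [fo.adj]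
  calc _ = P.map (prod.map (𝟙 X) h).op (P.map (prod.fst : X ⨯ Y ⟶ X).op (fo.fa X Y β)) := by
        rw [← reindex_comp, prod.map_fst, Category.comp_id]
    _ ≤ _ := reindex_mono _ (fa_counit fo X Y β)

lemma fa_sup_reindex_fst (X Y : C) (β : P.obj (op (X ⨯ Y))) (γ : P.obj (op X)) :
    fo.fa X Y (β ⊔ P.map (prod.fst : X ⨯ Y ⟶ X).op γ) = fo.fa X Y β ⊔ γ := by
  refine le_antisymm ?_ (sup_le (fa_mono fo X Y le_sup_left) ((fo.adj X Y _ _).2 le_sup_right))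
  rw [← sdiff_le_iff', fo.adj, reindex_sdiff]
  calc _ ≤ (β ⊔ P.map (prod.fst : X ⨯ Y ⟶ X).op γ) \ P.map (prod.fst : X ⨯ Y ⟶ X).op γ :=
        sdiff_le_sdiff_right (fa_counit fo X Y _)
    _ ≤ β := by rw [sup_sdiff_right_self]; exact sdiff_le

lemma fa_prod_le_fa_fa (T X Y : C) (β : P.obj (op (T ⨯ (X ⨯ Y)))) :
    fo.fa T (X ⨯ Y) β ≤ fo.fa T X (fo.fa (T ⨯ X) Y (P.map (prod.associator T X Y).hom.op β)) := by
  rw [fo.adj, fo.adj, ← reindex_comp]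
  have hfst : (prod.fst ≫ prod.fst : (T ⨯ X) ⨯ Y ⟶ T) = (prod.associator T X Y).hom ≫ prod.fst :=
    (prod.lift_fst _ _).symm
  rw [hfst, reindex_comp]
  exact reindex_mono _ (fa_counit fo T (X ⨯ Y) β)

lemma fa_prod_sup_le (T X Y : C) (β : P.obj (op (T ⨯ X))) (γ : P.obj (op (T ⨯ Y))) :
    fo.fa T (X ⨯ Y)
        (P.map (prod.map (𝟙 T) prod.fst).op β ⊔ P.map (prod.map (𝟙 T) prod.snd).op γ) ≤
      fo.fa T X β ⊔ fo.fa T Y γ := by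
  have hβ : (prod.associator T X Y).hom ≫ prod.map (𝟙 T) prod.fst = prod.fst := by
    ext <;> simp [Limits.prod.associator, prod.lift_fst, prod.lift_snd]
  have hγ : (prod.associator T X Y).hom ≫ prod.map (𝟙 T) prod.snd = prod.map prod.fst (𝟙 Y) := by
    ext <;> simp [Limits.prod.associator, prod.lift_fst, prod.lift_snd]
  refine (fa_prod_le_fa_fa fo T X Y _).trans (le_of_eq ?_)
  rw [reindex_sup, ← reindex_comp, ← reindex_comp, hβ, hγ, sup_comm, fa_sup_reindex_fst,
    ← fo.bc, sup_comm, fa_sup_reindex_fst]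

noncomputable def piConsLift {n : ℕ} (X : Fin (n + 1) → C) :
    X 0 ⨯ ∏ᶜ (fun j : Fin n => X j.succ) ⟶ ∏ᶜ X :=
  Pi.lift fun i => Fin.cases prod.fst (fun j => prod.snd ≫ Pi.π _ j) i

lemma piConsLift_π_zero {n : ℕ} (X : Fin (n + 1) → C) :
    piConsLift X ≫ Pi.π X 0 = prod.fst := by
  simp [piConsLift]

lemma piConsLift_π_succ {n : ℕ} (X : Fin (n + 1) → C) (j : Fin n) :
    piConsLift X ≫ Pi.π X j.succ = prod.snd ≫ Pi.π _ j := by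
  simp [piConsLift]

lemma fa_pi_sup_le (T : C) : ∀ {n : ℕ} (X : Fin n → C) (β : ∀ i, P.obj (op (T ⨯ X i))),
    fo.fa T (∏ᶜ X) (Finset.univ.sup fun i => P.map (prod.map (𝟙 T) (Pi.π X i)).op (β i)) ≤
      Finset.univ.sup fun i => fo.fa T (X i) (β i)
  | 0, X, β => by
    simp only [Finset.univ_eq_empty, Finset.sup_empty]
    exact (fa_bot_of_hom fo (Pi.lift fun i => i.elim0)).le
  | n + 1, X, β => by
    calc _ ≤ fo.fa T _ (P.map (prod.map (𝟙 T) (piConsLift X)).op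
          (Finset.univ.sup fun i => P.map (prod.map (𝟙 T) (Pi.π X i)).op (β i))) :=
          fa_le_fa_reindex fo T (piConsLift X) _
      _ = fo.fa T _ (P.map (prod.map (𝟙 T) prod.fst).op (β 0) ⊔
            P.map (prod.map (𝟙 T) prod.snd).op (Finset.univ.sup fun j =>
              P.map (prod.map (𝟙 T) (Pi.π (fun j : Fin n => X j.succ) j)).op (β j.succ))) := by
          rw [Fin.univ_succ, Finset.sup_cons, Finset.sup_map, reindex_sup, reindex_finset_sup,
            reindex_finset_sup]
          congr 2
          · rw [← reindex_comp, prod.map_map, Category.comp_id, piConsLift_π_zero]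
          · refine Finset.sup_congr rfl fun j _ => ?_
            rw [Function.comp_apply, ← reindex_comp, ← reindex_comp, prod.map_map, prod.map_map,
              Category.comp_id, Function.Embedding.coeFn_mk, piConsLift_π_succ]
      _ ≤ fo.fa T (X 0) (β 0) ⊔ fo.fa T _ _ := fa_prod_sup_le fo T _ _ _ _
      _ ≤ _ := by
          rw [Fin.univ_succ, Finset.sup_cons, Finset.sup_map]
          exact sup_le_sup_left (fa_pi_sup_le T _ _) _

lemma le_fa_pi_sup (T : C) {n : ℕ} (X : Fin n → C) (β : ∀ i, P.obj (op (T ⨯ X i))) :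
    (Finset.univ.sup fun i => fo.fa T (X i) (β i)) ≤
      fo.fa T (∏ᶜ X) (Finset.univ.sup fun i => P.map (prod.map (𝟙 T) (Pi.π X i)).op (β i)) :=
  Finset.sup_le fun i _ => (fa_le_fa_reindex fo T (Pi.π X i) (β i)).trans <|
    fa_mono fo _ _ <| Finset.le_sup (f := fun i => P.map (prod.map (𝟙 T) (Pi.π X i)).op (β i))
      (Finset.mem_univ i)

theorem fa_pi_sup (T : C) {n : ℕ} (X : Fin n → C) (β : ∀ i, P.obj (op (T ⨯ X i))) :
    fo.fa T (∏ᶜ X) (Finset.univ.sup fun i => P.map (prod.map (𝟙 T) (Pi.π X i)).op (β i)) =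
      Finset.univ.sup fun i => fo.fa T (X i) (β i) :=
  le_antisymm (fa_pi_sup_le fo T X β) (le_fa_pi_sup fo T X β)

end

theorem stmt17 {C : Type u₁} [Category.{v₁} C] [HasFiniteProducts C]
    (P : Cᵒᵖ ⥤ BoolAlg.{w}) (fo : FOStructure P) (n : ℕ) (X : Fin n → C)
    (α : ∀ i, P.obj (op (X i))) :
    (Finset.univ.sup fun i =>
        fo.fa (⊤_ C) (X i) (P.map (prod.leftUnitor (X i)).hom.op (α i))) =
      fo.fa (⊤_ C) (∏ᶜ X)
        (P.map (prod.leftUnitor (∏ᶜ X)).hom.op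
          (Finset.univ.sup fun i => P.map (Pi.π X i).op (α i))) := by
  have hα : ∀ i, P.map (prod.leftUnitor (∏ᶜ X)).hom.op (P.map (Pi.π X i).op (α i)) =
      P.map (prod.map (𝟙 _) (Pi.π X i)).op (P.map (prod.leftUnitor (X i)).hom.op (α i)) :=
    fun i => by rw [← reindex_comp, ← reindex_comp, prod.leftUnitor_hom_naturality]
  simp only [reindex_finset_sup, hα, fa_pi_sup]

end BooleanDoctrine
end
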